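/- If the evolution family Φ has a uniform h-dichotomy on [e∗, +∞), then Φ is uniformly h-noncritical on [e∗, +∞): there exist T > e∗ and θ ∈ (0,1) such that every solution satisfies |x(t)| ≤ θ·sup{|x(u)| : u ∈ J, |u∗t^{∗-1}|∗ ≤ T} for all t ≥ T. -/

import Mathlib

/-! For `t ≥ T` the window `{u : |u ∗ t^{∗-1}|∗ ≤ T}` is the interval `[a, b]` with
`h b / h t = h t / h a = h T`. Splitting a solution with the dichotomy projections,
`x(t) = Φ(t,a) P(a) x(a) + Φ(t,b) (I - P(b)) x(b)`, and both terms are at most `K (h T)^{-α}` times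
the supremum of `|x|` over the window. Choosing `h T = (4K)^{1/α}` makes this factor `1/4`, so
`θ = 1/2` works. -/

open Set

noncomputable section

/-- The operation `t ∗ s := h⁻¹ (h t · h s)` on `J`. -/
def star (h hinv : ℝ → ℝ) (t s : ℝ) : ℝ := hinv (h t * h s)

/-- The unit element `e∗ := h⁻¹ 1`. -/
def estar (hinv : ℝ → ℝ) : ℝ := hinv 1

/-- The inverse `t^{∗-1} := h⁻¹ (1 / h t)`. -/
def sinv (h hinv : ℝ → ℝ) (t : ℝ) : ℝ := hinv (1 / h t)

/-- The absolute value `|t|∗ := t` if `e∗ ≤ t` and `t^{∗-1}` otherwise. -/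
def absStar (h hinv : ℝ → ℝ) (t : ℝ) : ℝ := if estar hinv ≤ t then t else sinv h hinv t

/-- `h : J → (0,∞)` is a growth rate: a strictly increasing homeomorphism of
`J = (a₀,∞)` (or `J = ℝ`) onto `(0,∞)`, with (two-sided) inverse `hinv`. -/
structure GrowthRate (J : Set ℝ) (h hinv : ℝ → ℝ) : Prop where
  J_eq : (∃ a₀ : ℝ, J = Set.Ioi a₀) ∨ J = Set.univ
  mono : StrictMonoOn h J
  cont : ContinuousOn h J
  pos : ∀ t ∈ J, 0 < h t
  inv_left : ∀ t ∈ J, hinv (h t) = t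
  inv_mem : ∀ y ∈ Set.Ioi (0:ℝ), hinv y ∈ J
  inv_right : ∀ y ∈ Set.Ioi (0:ℝ), h (hinv y) = y
  inv_cont : ContinuousOn hinv (Set.Ioi 0)

variable {E : Type*} [NormedAddCommGroup E] [NormedSpace ℝ E]

/-- An evolution family on `J`: `Φ t t = I` and `Φ t u ∘ Φ u s = Φ t s`. -/
def IsEvolutionFamily (J : Set ℝ) (Φ : ℝ → ℝ → (E →L[ℝ] E)) : Prop :=
  (∀ t ∈ J, Φ t t = 1) ∧ (∀ t ∈ J, ∀ u ∈ J, ∀ s ∈ J, Φ t u * Φ u s = Φ t s)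

/-- `Φ` has a uniform `h`-dichotomy on `I` with projections `P` and constants `K, α`. -/
def HasUHDWith (I : Set ℝ) (h : ℝ → ℝ) (Φ : ℝ → ℝ → (E →L[ℝ] E))
    (P : ℝ → (E →L[ℝ] E)) (K α : ℝ) : Prop :=
  (∀ t ∈ I, P t * P t = P t) ∧
  (∀ t ∈ I, ∀ s ∈ I, P t * Φ t s = Φ t s * P s) ∧
  (∀ s ∈ I, ∀ t ∈ I, s ≤ t → ‖Φ t s * P s‖ ≤ K * (h t / h s) ^ (-α)) ∧
  (∀ s ∈ I, ∀ t ∈ I, t ≤ s → ‖Φ t s * (1 - P s)‖ ≤ K * (h s / h t) ^ (-α))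

/-- `Φ` has a uniform `h`-dichotomy on `I`. -/
def HasUHD (I : Set ℝ) (h : ℝ → ℝ) (Φ : ℝ → ℝ → (E →L[ℝ] E)) : Prop :=
  ∃ K ≥ (1:ℝ), ∃ α > (0:ℝ), ∃ P : ℝ → (E →L[ℝ] E), HasUHDWith I h Φ P K α

/-- Uniform bounded `h`-growth on `I`: every solution satisfies
`|x t| ≤ C |x s|` for `s ∈ I` and `t ∈ [s, s∗T] ∩ I`. -/
def UnifBoundedHGrowth (J I : Set ℝ) (h hinv : ℝ → ℝ) (Φ : ℝ → ℝ → (E →L[ℝ] E)) : Prop :=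
  ∃ T > estar hinv, ∃ C ≥ (1:ℝ), ∀ s₀ ∈ J, ∀ ξ : E, ∀ s ∈ I, ∀ t ∈ I,
    s ≤ t → t ≤ star h hinv s T → ‖(Φ t s₀) ξ‖ ≤ C * ‖(Φ s s₀) ξ‖

/-- Uniform bounded `h`-decay on `I`: every solution satisfies
`|x t| ≤ C |x s|` for `s ∈ I` and `t ∈ [s∗T^{∗-1}, s] ∩ I`. -/
def UnifBoundedHDecay (J I : Set ℝ) (h hinv : ℝ → ℝ) (Φ : ℝ → ℝ → (E →L[ℝ] E)) : Prop :=
  ∃ T > estar hinv, ∃ C ≥ (1:ℝ), ∀ s₀ ∈ J, ∀ ξ : E, ∀ s ∈ I, ∀ t ∈ I,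
    star h hinv s (sinv h hinv T) ≤ t → t ≤ s → ‖(Φ t s₀) ξ‖ ≤ C * ‖(Φ s s₀) ξ‖

/-- Uniform bounded `h`-growth and `h`-decay on `I`: every solution satisfies
`|x t| ≤ C |x s|` for `s ∈ I` and `t ∈ [s∗T^{∗-1}, s∗T] ∩ I`. -/
def UnifBoundedHGrowthDecay (J I : Set ℝ) (h hinv : ℝ → ℝ) (Φ : ℝ → ℝ → (E →L[ℝ] E)) : Prop :=
  ∃ T > estar hinv, ∃ C ≥ (1:ℝ), ∀ s₀ ∈ J, ∀ ξ : E, ∀ s ∈ I, ∀ t ∈ I,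
    star h hinv s (sinv h hinv T) ≤ t → t ≤ star h hinv s T → ‖(Φ t s₀) ξ‖ ≤ C * ‖(Φ s s₀) ξ‖

/-- `Φ` is uniformly `h`-noncritical on `[e∗,∞)`: there are `T > e∗` and `θ ∈ (0,1)` with
`|x t| ≤ θ · sup {|x u| : u ∈ J, |u ∗ t^{∗-1}|∗ ≤ T}` for all `t ≥ T`, for every solution. -/
def UnifHNoncritical (J : Set ℝ) (h hinv : ℝ → ℝ) (Φ : ℝ → ℝ → (E →L[ℝ] E)) : Prop :=
  ∃ T > estar hinv, ∃ θ : ℝ, 0 < θ ∧ θ < 1 ∧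
    ∀ s₀ ∈ J, ∀ ξ : E, ∀ t, T ≤ t →
      ‖(Φ t s₀) ξ‖ ≤ θ * sSup ((fun u => ‖(Φ u s₀) ξ‖) ''
        {u | u ∈ J ∧ absStar h hinv (star h hinv u (sinv h hinv t)) ≤ T})

/-- `Φ` is `h`-expansive on `I`: there are `L, β > 0` such that every solution satisfies
`|x t| ≤ L (h(t∗a^{∗-1})^{-β} |x a| + h(b∗t^{∗-1})^{-β} |x b|)` for `[a,b] ⊆ I`, `a ≤ t ≤ b`. -/
def HExpansive (J I : Set ℝ) (h hinv : ℝ → ℝ) (Φ : ℝ → ℝ → (E →L[ℝ] E)) : Prop :=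
  ∃ L > (0:ℝ), ∃ β > (0:ℝ), ∀ s₀ ∈ J, ∀ ξ : E, ∀ a ∈ I, ∀ b ∈ I, ∀ t, a ≤ t → t ≤ b →
    ‖(Φ t s₀) ξ‖ ≤ L * ((h (star h hinv t (sinv h hinv a))) ^ (-β) * ‖(Φ a s₀) ξ‖ +
      (h (star h hinv b (sinv h hinv t))) ^ (-β) * ‖(Φ b s₀) ξ‖)

namespace GrowthRate

variable {J : Set ℝ} {h hinv : ℝ → ℝ} (hgr : GrowthRate J h hinv)
include hgr

theorem hinv_mem {y : ℝ} (hy : 0 < y) : hinv y ∈ J := hgr.inv_mem y hy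

theorem h_hinv {y : ℝ} (hy : 0 < y) : h (hinv y) = y := hgr.inv_right y hy

theorem mem_of_le {u v : ℝ} (hu : u ∈ J) (huv : u ≤ v) : v ∈ J := by
  rcases hgr.J_eq with ⟨a₀, rfl⟩ | rfl
  · exact lt_of_lt_of_le hu huv
  · trivial

theorem h_le_h_iff {u v : ℝ} (hu : u ∈ J) (hv : v ∈ J) : h u ≤ h v ↔ u ≤ v :=
  hgr.mono.le_iff_le hu hv

theorem hinv_le_iff {y u : ℝ} (hy : 0 < y) (hu : u ∈ J) : hinv y ≤ u ↔ y ≤ h u := by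
  rw [← hgr.h_le_h_iff (hgr.hinv_mem hy) hu, hgr.h_hinv hy]

theorem le_hinv_iff {y u : ℝ} (hy : 0 < y) (hu : u ∈ J) : u ≤ hinv y ↔ h u ≤ y := by
  rw [← hgr.h_le_h_iff hu (hgr.hinv_mem hy), hgr.h_hinv hy]

theorem hinv_le_hinv_iff {y z : ℝ} (hy : 0 < y) (hz : 0 < z) : hinv y ≤ hinv z ↔ y ≤ z := by
  rw [hgr.hinv_le_iff hy (hgr.hinv_mem hz), hgr.h_hinv hz]

theorem estar_le_iff {u : ℝ} (hu : u ∈ J) : estar hinv ≤ u ↔ 1 ≤ h u :=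
  hgr.hinv_le_iff one_pos hu

theorem estar_lt_iff {u : ℝ} (hu : u ∈ J) : estar hinv < u ↔ 1 < h u := by
  rw [estar, ← hgr.mono.lt_iff_lt (hgr.hinv_mem one_pos) hu, hgr.h_hinv one_pos]

theorem Ici_estar_subset : Ici (estar hinv) ⊆ J :=
  fun _ hu => hgr.mem_of_le (hgr.hinv_mem one_pos) hu

theorem star_sinv {u t : ℝ} (ht : t ∈ J) :
    star h hinv u (sinv h hinv t) = hinv (h u / h t) := by
  unfold _root_.star sinv
  rw [hgr.h_hinv (one_div_pos.2 (hgr.pos t ht)), mul_one_div]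

theorem absStar_hinv_le_hinv_iff {y Z : ℝ} (hy : 0 < y) (hZ : 1 ≤ Z) :
    absStar h hinv (hinv y) ≤ hinv Z ↔ Z⁻¹ ≤ y ∧ y ≤ Z := by
  have hZ0 : 0 < Z := one_pos.trans_le hZ
  unfold absStar
  split_ifs with hy1
  · rw [hgr.estar_le_iff (hgr.hinv_mem hy), hgr.h_hinv hy] at hy1
    rw [hgr.hinv_le_hinv_iff hy hZ0]
    exact ⟨fun h => ⟨(inv_le_one_of_one_le₀ hZ).trans hy1, h⟩, And.right⟩
  · rw [hgr.estar_le_iff (hgr.hinv_mem hy), hgr.h_hinv hy, not_le] at hy1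
    rw [sinv, hgr.h_hinv hy, hgr.hinv_le_hinv_iff (one_div_pos.2 hy) hZ0, one_div,
      inv_le_comm₀ hy hZ0]
    exact ⟨fun h => ⟨h, hy1.le.trans hZ⟩, And.left⟩

theorem hinv_div_le {t Y : ℝ} (ht : t ∈ J) (hY : 1 ≤ Y) : hinv (h t / Y) ≤ t :=
  (hgr.hinv_le_iff (div_pos (hgr.pos t ht) (one_pos.trans_le hY)) ht).2
    (div_le_self (hgr.pos t ht).le hY)

theorem le_hinv_mul {t Y : ℝ} (ht : t ∈ J) (hY : 1 ≤ Y) : t ≤ hinv (h t * Y) :=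
  (hgr.le_hinv_iff (mul_pos (hgr.pos t ht) (one_pos.trans_le hY)) ht).2
    (le_mul_of_one_le_right (hgr.pos t ht).le hY)

theorem estar_le_hinv_div {t Y : ℝ} (ht : t ∈ J) (hY : 0 < Y) (hYt : Y ≤ h t) :
    estar hinv ≤ hinv (h t / Y) := by
  have hlo := div_pos (hgr.pos t ht) hY
  rwa [hgr.estar_le_iff (hgr.hinv_mem hlo), hgr.h_hinv hlo, one_le_div hY]

theorem window_eq_Icc {t Z : ℝ} (ht : t ∈ J) (hZ : 1 ≤ Z) :
    {u | u ∈ J ∧ absStar h hinv (star h hinv u (sinv h hinv t)) ≤ hinv Z} =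
      Icc (hinv (h t / Z)) (hinv (h t * Z)) := by
  have ht0 := hgr.pos t ht
  have hZ0 : 0 < Z := one_pos.trans_le hZ
  ext u
  by_cases hu : u ∈ J
  · rw [mem_ofPred_eq, mem_Icc, hgr.star_sinv ht,
      hgr.absStar_hinv_le_hinv_iff (div_pos (hgr.pos u hu) ht0) hZ,
      hgr.hinv_le_iff (div_pos ht0 hZ0) hu, hgr.le_hinv_iff (mul_pos ht0 hZ0) hu,
      le_div_iff₀ ht0, div_le_iff₀ ht0, div_eq_inv_mul, mul_comm Z]
    exact and_iff_right hu
  · refine iff_of_false (fun hu' => hu hu'.1) fun hu' => hu ?_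
    exact hgr.mem_of_le (hgr.hinv_mem (div_pos ht0 hZ0)) hu'.1

end GrowthRate

namespace HasUHDWith

variable {J I : Set ℝ} {h : ℝ → ℝ} {Φ : ℝ → ℝ → (E →L[ℝ] E)} {P : ℝ → (E →L[ℝ] E)} {K α : ℝ}

theorem evolution_eq_add (hd : HasUHDWith I h Φ P K α) (hΦ : IsEvolutionFamily J Φ)
    (hIJ : I ⊆ J) {a b u s₀ : ℝ} (ha : a ∈ I) (hb : b ∈ I) (hu : u ∈ I) (hs₀ : s₀ ∈ J) :
    Φ u s₀ = Φ u a * P a * Φ a s₀ + Φ u b * (1 - P b) * Φ b s₀ := by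
  obtain ⟨hΦid, hΦmul⟩ := hΦ
  have hcancel : ∀ c ∈ I, Φ u c * Φ c u = 1 := fun c hc => by
    rw [hΦmul u (hIJ hu) c (hIJ hc) u (hIJ hu), hΦid u (hIJ hu)]
  have hstable : Φ u a * P a * Φ a s₀ = P u * Φ u s₀ := by
    rw [← hΦmul a (hIJ ha) u (hIJ hu) s₀ hs₀, mul_assoc, ← mul_assoc (P a), hd.2.1 a ha u hu,
      ← mul_assoc, ← mul_assoc, hcancel a ha, one_mul]
  have hunstable : Φ u b * (1 - P b) * Φ b s₀ = (1 - P u) * Φ u s₀ := by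
    have hcomm : (1 - P b) * Φ b u = Φ b u * (1 - P u) := by
      rw [sub_mul, mul_sub, one_mul, mul_one, hd.2.1 b hb u hu]
    rw [← hΦmul b (hIJ hb) u (hIJ hu) s₀ hs₀, mul_assoc, ← mul_assoc (1 - P b), hcomm,
      ← mul_assoc, ← mul_assoc, hcancel b hb, one_mul]
  rw [hstable, hunstable, ← add_mul, add_sub_cancel, one_mul]

theorem norm_apply_le (hd : HasUHDWith I h Φ P K α) (hΦ : IsEvolutionFamily J Φ)
    (hIJ : I ⊆ J) {a b u s₀ : ℝ} (ha : a ∈ I) (hb : b ∈ I) (hu : u ∈ I) (hs₀ : s₀ ∈ J)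
    (hau : a ≤ u) (hub : u ≤ b) (ξ : E) :
    ‖Φ u s₀ ξ‖ ≤ K * (h u / h a) ^ (-α) * ‖Φ a s₀ ξ‖ + K * (h b / h u) ^ (-α) * ‖Φ b s₀ ξ‖ := by
  rw [hd.evolution_eq_add hΦ hIJ ha hb hu hs₀]
  calc ‖(Φ u a * P a * Φ a s₀ + Φ u b * (1 - P b) * Φ b s₀) ξ‖
      ≤ ‖Φ u a * P a‖ * ‖Φ a s₀ ξ‖ + ‖Φ u b * (1 - P b)‖ * ‖Φ b s₀ ξ‖ :=
        (norm_add_le _ _).trans (add_le_add ((Φ u a * P a).le_opNorm _)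
          ((Φ u b * (1 - P b)).le_opNorm _))
    _ ≤ _ := by
        gcongr
        · exact hd.2.2.1 a ha u hu hau
        · exact hd.2.2.2 b hb u hu hub

theorem norm_apply_le_of_mem_Icc (hd : HasUHDWith I h Φ P K α) (hΦ : IsEvolutionFamily J Φ)
    (hIJ : I ⊆ J) [I.OrdConnected] (hmono : MonotoneOn h I) (hpos : ∀ u ∈ I, 0 < h u)
    (hK : 0 ≤ K) (hα : 0 ≤ α) {a b u s₀ : ℝ} (ha : a ∈ I) (hb : b ∈ I) (hu : u ∈ Icc a b)
    (hs₀ : s₀ ∈ J) (ξ : E) :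
    ‖Φ u s₀ ξ‖ ≤ K * (‖Φ a s₀ ξ‖ + ‖Φ b s₀ ξ‖) := by
  have huI : u ∈ I := Set.OrdConnected.out ‹_› ha hb hu
  have hdecay : ∀ {v w}, v ∈ I → w ∈ I → v ≤ w → (h w / h v) ^ (-α) ≤ 1 := fun hv hw hvw =>
    Real.rpow_le_one_of_one_le_of_nonpos
      ((one_le_div (hpos _ hv)).2 (hmono hv hw hvw)) (neg_nonpos.2 hα)
  calc ‖Φ u s₀ ξ‖ ≤ K * (h u / h a) ^ (-α) * ‖Φ a s₀ ξ‖ + K * (h b / h u) ^ (-α) * ‖Φ b s₀ ξ‖ :=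
        hd.norm_apply_le hΦ hIJ ha hb huI hs₀ hu.1 hu.2 ξ
    _ ≤ K * 1 * ‖Φ a s₀ ξ‖ + K * 1 * ‖Φ b s₀ ξ‖ := by
        gcongr
        · exact hdecay ha huI hu.1
        · exact hdecay huI hb hu.2
    _ = K * (‖Φ a s₀ ξ‖ + ‖Φ b s₀ ξ‖) := by ring

theorem norm_apply_le_mul_sSup {hinv : ℝ → ℝ} (hd : HasUHDWith (Ici (estar hinv)) h Φ P K α)
    (hgr : GrowthRate J h hinv) (hΦ : IsEvolutionFamily J Φ) (hK : 0 ≤ K) (hα : 0 ≤ α)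
    {t Y s₀ : ℝ} (ht : t ∈ J) (hY : 1 ≤ Y) (hYt : Y ≤ h t) (hs₀ : s₀ ∈ J) (ξ : E) :
    ‖Φ t s₀ ξ‖ ≤ 2 * (K * Y ^ (-α)) *
      sSup ((fun u => ‖Φ u s₀ ξ‖) '' Icc (hinv (h t / Y)) (hinv (h t * Y))) := by
  have ht0 := hgr.pos t ht
  have hY0 : 0 < Y := one_pos.trans_le hY
  have hIJ := hgr.Ici_estar_subset
  set a := hinv (h t / Y)
  set b := hinv (h t * Y)
  set x := fun u => ‖Φ u s₀ ξ‖
  have hat : a ≤ t := hgr.hinv_div_le ht hY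
  have htb : t ≤ b := hgr.le_hinv_mul ht hY
  have ha : a ∈ Ici (estar hinv) := hgr.estar_le_hinv_div ht hY0 hYt
  have hb : b ∈ Ici (estar hinv) := le_trans ha (hat.trans htb)
  have hbdd : BddAbove (x '' Icc a b) := ⟨K * (x a + x b), forall_mem_image.2 fun u hu =>
    hd.norm_apply_le_of_mem_Icc hΦ hIJ (hgr.mono.monotoneOn.mono hIJ)
      (fun u hu => hgr.pos u (hIJ hu)) hK hα ha hb hu hs₀ ξ⟩
  have hxa : x a ≤ sSup (x '' Icc a b) := le_csSup hbdd ⟨a, ⟨le_rfl, hat.trans htb⟩, rfl⟩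
  have hxb : x b ≤ sSup (x '' Icc a b) := le_csSup hbdd ⟨b, ⟨hat.trans htb, le_rfl⟩, rfl⟩
  have hKY : 0 ≤ K * Y ^ (-α) := by positivity
  calc x t ≤ K * (h t / h a) ^ (-α) * x a + K * (h b / h t) ^ (-α) * x b :=
        hd.norm_apply_le hΦ hIJ ha hb (le_trans ha hat) hs₀ hat htb ξ
    _ = K * Y ^ (-α) * (x a + x b) := by
        rw [hgr.h_hinv (div_pos ht0 hY0), hgr.h_hinv (mul_pos ht0 hY0), div_div_cancel₀ ht0.ne',
          mul_div_cancel_left₀ Y ht0.ne']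
        ring
    _ ≤ K * Y ^ (-α) * (sSup (x '' Icc a b) + sSup (x '' Icc a b)) := by gcongr
    _ = 2 * (K * Y ^ (-α)) * sSup (x '' Icc a b) := by ring

end HasUHDWith

theorem statement10_general {J : Set ℝ} {h hinv : ℝ → ℝ} (hgr : GrowthRate J h hinv)
    {E : Type*} [NormedAddCommGroup E] [NormedSpace ℝ E]
    (Φ : ℝ → ℝ → (E →L[ℝ] E)) (hΦ : IsEvolutionFamily J Φ)
    (hUHD : HasUHD (Set.Ici (estar hinv)) h Φ) :
    UnifHNoncritical J h hinv Φ := by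
  obtain ⟨K, hK, α, hα, P, hd⟩ := hUHD
  set Y := (4 * K) ^ α⁻¹
  have hY : 1 < Y := Real.one_lt_rpow (by linarith) (inv_pos.2 hα)
  have hY0 : 0 < Y := one_pos.trans hY
  have hKY : K * Y ^ (-α) = 1 / 4 := by
    rw [Real.rpow_neg hY0.le, Real.rpow_inv_rpow (by positivity) hα.ne']
    field_simp
  have hT : estar hinv < hinv Y := by
    rwa [hgr.estar_lt_iff (hgr.hinv_mem hY0), hgr.h_hinv hY0]
  refine ⟨hinv Y, hT, 1 / 2, by norm_num, by norm_num, fun s₀ hs₀ ξ t hTt => ?_⟩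
  have htJ := hgr.mem_of_le (hgr.hinv_mem hY0) hTt
  have hYt : Y ≤ h t := (hgr.hinv_le_iff hY0 htJ).1 hTt
  rw [hgr.window_eq_Icc htJ hY.le]
  convert hd.norm_apply_le_mul_sSup hgr hΦ (by linarith) hα.le htJ hY.le hYt hs₀ ξ using 2
  rw [hKY]
  norm_num

/-- a uniform `h`-dichotomy on `[e∗,∞)` implies uniform `h`-noncriticality
on `[e∗,∞)`. -/
theorem statement10 {J : Set ℝ} {h hinv : ℝ → ℝ} (hgr : GrowthRate J h hinv)
    {E : Type*} [NormedAddCommGroup E] [NormedSpace ℝ E] [FiniteDimensional ℝ E]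
    (Φ : ℝ → ℝ → (E →L[ℝ] E)) (hΦ : IsEvolutionFamily J Φ)
    (hUHD : HasUHD (Set.Ici (estar hinv)) h Φ) :
    UnifHNoncritical J h hinv Φ :=
  statement10_general hgr Φ hΦ hUHD
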